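/- Let (E, <, #) be a prime event structure with inherited conflict in which every local configuration [e] is a configuration. Let U ⊆ E be a set of events, C ⊆ U a configuration, D ⊆ U a set of events with C ∩ D = ∅, and k ≥ 1. Let e₁, …, e_k ∈ D be pairwise distinct events and e'₁, …, e'_k ∈ U events such that for every i: e'_i # e_i, [e'_i] ⊆ U, [e'_i] ∪ C is a configuration, and [e'_i] ∩ D = ∅; and such that ¬(e'_i # e'_j) for all i ≠ j. Then the set J := [e'₁] ∪ … ∪ [e'_k] is a k-partial alternative to D after C in U; in particular, J is a configuration, J ∪ C is a configuration, and J ∩ D = ∅. -/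

import Mathlib

/-- A configuration of a prime event structure: causally closed and conflict-free. -/
def IsConfig {E : Type*} (lt cfl : E → E → Prop) (C : Set E) : Prop :=
  (∀ e ∈ C, ∀ e', lt e' e → e' ∈ C) ∧ ∀ e ∈ C, ∀ e' ∈ C, ¬ cfl e e'

/-- The local configuration [e] := ⌈e⌉ ∪ {e} of an event. -/
def locC {E : Type*} (lt : E → E → Prop) (e : E) : Set E := {e' | lt e' e ∨ e' = e}

/-- A clue to D after C in U: a configuration J ⊆ U such that C ∪ J is a
configuration and D ∩ J = ∅. -/
def Clue {E : Type*} (lt cfl : E → E → Prop) (U C D J : Set E) : Prop :=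
  IsConfig lt cfl J ∧ J ⊆ U ∧ IsConfig lt cfl (C ∪ J) ∧ D ∩ J = ∅

/-- An alternative to D after C in U: a clue J such that every event of D is in
conflict with some event of J. -/
def AltTo {E : Type*} (lt cfl : E → E → Prop) (U C D J : Set E) : Prop :=
  Clue lt cfl U C D J ∧ ∀ e ∈ D, ∃ e' ∈ J, cfl e e'

/-- A k-partial alternative to D after C in U: a configuration J ⊆ U which is an
alternative to some D̂ ⊆ D with |D̂| = k. -/
def KPartialAlt {E : Type*} (lt cfl : E → E → Prop) (U C D : Set E) (k : ℕ)
    (J : Set E) : Prop :=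
  IsConfig lt cfl J ∧ J ⊆ U ∧
    ∃ Dhat ⊆ D, Dhat.ncard = k ∧ AltTo lt cfl U C Dhat J

/-! Inherited conflict, together with symmetry, propagates a conflict between members of two
local configurations `[x]` and `[y]` up to their maxima, so `x # y`. Hence the local
configurations of pairwise non-conflicting events have a conflict-free union, and the union
of configurations is always causally closed. `J` is then an alternative to
`D̂ = {e₁, …, e_k}`, witnessed by the `e'_i`, and injectivity of `e` gives `|D̂| = k`. -/

section

variable {E : Type*} {lt cfl : E → E → Prop}

theorem mem_locC_self (x : E) : x ∈ locC lt x := Or.inr rfl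

theorem cfl_of_cfl_of_mem_locC
    (hInh : ∀ e e' e'', cfl e e' → lt e' e'' → cfl e e'')
    {a b x : E} (ha : a ∈ locC lt x) (hba : cfl b a) : cfl b x := by
  rcases ha with hax | rfl
  · exact hInh b a x hba hax
  · exact hba

theorem cfl_of_mem_locC (hSymm : Symmetric cfl)
    (hInh : ∀ e e' e'', cfl e e' → lt e' e'' → cfl e e'')
    {a b x y : E} (ha : a ∈ locC lt x) (hb : b ∈ locC lt y) (hab : cfl a b) : cfl x y :=
  cfl_of_cfl_of_mem_locC hInh hb (hSymm (cfl_of_cfl_of_mem_locC hInh ha (hSymm hab)))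

theorem IsConfig.union (hSymm : Symmetric cfl) {A B : Set E}
    (hA : IsConfig lt cfl A) (hB : IsConfig lt cfl B) (hAB : ∀ a ∈ A, ∀ b ∈ B, ¬ cfl a b) :
    IsConfig lt cfl (A ∪ B) := by
  refine ⟨?_, ?_⟩
  · rintro x (hx | hx) y hyx
    · exact Or.inl (hA.1 x hx y hyx)
    · exact Or.inr (hB.1 x hx y hyx)
  · rintro a (ha | ha) b (hb | hb) hab
    · exact hA.2 a ha b hb hab
    · exact hAB a ha b hb hab
    · exact hAB b hb a ha (hSymm hab)
    · exact hB.2 a ha b hb hab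

theorem isConfig_iUnion {ι : Type*} {J : ι → Set E} (hJ : ∀ i, IsConfig lt cfl (J i))
    (hJJ : Pairwise fun i j => ∀ a ∈ J i, ∀ b ∈ J j, ¬ cfl a b) :
    IsConfig lt cfl (⋃ i, J i) := by
  simp only [IsConfig, Set.mem_iUnion]
  refine ⟨?_, ?_⟩
  · rintro x ⟨i, hx⟩ y hyx
    exact ⟨i, (hJ i).1 x hx y hyx⟩
  · rintro a ⟨i, ha⟩ b ⟨j, hb⟩
    by_cases hij : i = j
    · subst hij
      exact (hJ i).2 a ha b hb
    · exact hJJ hij a ha b hb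

theorem isConfig_iUnion_locC (hSymm : Symmetric cfl)
    (hInh : ∀ e e' e'', cfl e e' → lt e' e'' → cfl e e'')
    (hloc : ∀ e, IsConfig lt cfl (locC lt e)) {ι : Type*} {x : ι → E}
    (hx : Pairwise fun i j => ¬ cfl (x i) (x j)) :
    IsConfig lt cfl (⋃ i, locC lt (x i)) :=
  isConfig_iUnion (fun i => hloc (x i))
    fun _ _ hij _ ha _ hb hab => hx hij (cfl_of_mem_locC hSymm hInh ha hb hab)

theorem Clue.anti {U C D D' J : Set E} (h : Clue lt cfl U C D J) (hD' : D' ⊆ D) :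
    Clue lt cfl U C D' J :=
  ⟨h.1, h.2.1, h.2.2.1, Set.subset_eq_empty (Set.inter_subset_inter_left J hD') h.2.2.2⟩

theorem AltTo.kPartialAlt {U C D D' J : Set E} {k : ℕ} (h : AltTo lt cfl U C D' J)
    (hD' : D' ⊆ D) (hk : D'.ncard = k) : KPartialAlt lt cfl U C D k J :=
  ⟨h.1.1, h.1.2.1, D', hD', hk, h⟩

end

theorem stmt7_general {E : Type*} (lt cfl : E → E → Prop)
    (hSymm : Symmetric cfl)
    (hInh : ∀ e e' e'', cfl e e' → lt e' e'' → cfl e e'')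
    (hloc : ∀ e, IsConfig lt cfl (locC lt e))
    (U C D : Set E) (hC : IsConfig lt cfl C)
    (k : ℕ)
    (e e' : Fin k → E) (hinj : Function.Injective e) (heD : ∀ i, e i ∈ D)
    (hcfl : ∀ i, cfl (e' i) (e i))
    (hlocU : ∀ i, locC lt (e' i) ⊆ U)
    (hlocC : ∀ i, IsConfig lt cfl (locC lt (e' i) ∪ C))
    (hlocD : ∀ i, locC lt (e' i) ∩ D = ∅)
    (hnc : ∀ i j, i ≠ j → ¬ cfl (e' i) (e' j)) :
    KPartialAlt lt cfl U C D k (⋃ i, locC lt (e' i)) ∧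
      IsConfig lt cfl (⋃ i, locC lt (e' i)) ∧
      IsConfig lt cfl ((⋃ i, locC lt (e' i)) ∪ C) ∧
      (⋃ i, locC lt (e' i)) ∩ D = ∅ := by
  set J := ⋃ i, locC lt (e' i)
  have hJ : IsConfig lt cfl J := isConfig_iUnion_locC hSymm hInh hloc hnc
  have hJC : IsConfig lt cfl (J ∪ C) := hJ.union hSymm hC fun a ha b hb => by
    obtain ⟨i, hai⟩ := Set.mem_iUnion.1 ha
    exact (hlocC i).2 a (Or.inl hai) b (Or.inr hb)
  have hJD : J ∩ D = ∅ := by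
    simp only [J, Set.iUnion_inter, hlocD, Set.iUnion_empty]
  have hclue : Clue lt cfl U C D J :=
    ⟨hJ, Set.iUnion_subset hlocU, Set.union_comm C J ▸ hJC, Set.inter_comm J D ▸ hJD⟩
  have hrange : Set.range e ⊆ D := Set.range_subset_iff.2 heD
  have halt : AltTo lt cfl U C (Set.range e) J := by
    refine ⟨hclue.anti hrange, ?_⟩
    rintro _ ⟨i, rfl⟩
    exact ⟨e' i, Set.mem_iUnion.2 ⟨i, mem_locC_self _⟩, hSymm (hcfl i)⟩
  have hcard : (Set.range e).ncard = k := by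
    rw [Set.ncard_range_of_injective hinj, Nat.card_eq_fintype_card, Fintype.card_fin]
  exact ⟨halt.kPartialAlt hrange hcard, hJ, hJC, hJD⟩

/-- Correctness of the comb construction: given pairwise distinct events
e₁, …, e_k ∈ D and events e'₁, …, e'_k ∈ U with e'_i # e_i, [e'_i] ⊆ U,
[e'_i] ∪ C a configuration, [e'_i] ∩ D = ∅, and ¬(e'_i # e'_j) for i ≠ j,
the set J := [e'₁] ∪ … ∪ [e'_k] is a k-partial alternative to D after C in U;
in particular J is a configuration, J ∪ C is a configuration, and J ∩ D = ∅. -/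
theorem stmt7 {E : Type*} (lt cfl : E → E → Prop)
    (hTrans : Transitive lt) (hIrrefl : ∀ e, ¬ lt e e)
    (hSymm : Symmetric cfl) (hCIrrefl : ∀ e, ¬ cfl e e)
    (hInh : ∀ e e' e'', cfl e e' → lt e' e'' → cfl e e'')
    (hloc : ∀ e, IsConfig lt cfl (locC lt e))
    (U C D : Set E) (hCU : C ⊆ U) (hC : IsConfig lt cfl C) (hDU : D ⊆ U)
    (hCD : C ∩ D = ∅) (k : ℕ) (hk : 1 ≤ k)
    (e e' : Fin k → E) (hinj : Function.Injective e) (heD : ∀ i, e i ∈ D)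
    (he'U : ∀ i, e' i ∈ U)
    (hcfl : ∀ i, cfl (e' i) (e i))
    (hlocU : ∀ i, locC lt (e' i) ⊆ U)
    (hlocC : ∀ i, IsConfig lt cfl (locC lt (e' i) ∪ C))
    (hlocD : ∀ i, locC lt (e' i) ∩ D = ∅)
    (hnc : ∀ i j, i ≠ j → ¬ cfl (e' i) (e' j)) :
    KPartialAlt lt cfl U C D k (⋃ i, locC lt (e' i)) ∧
      IsConfig lt cfl (⋃ i, locC lt (e' i)) ∧
      IsConfig lt cfl ((⋃ i, locC lt (e' i)) ∪ C) ∧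
      (⋃ i, locC lt (e' i)) ∩ D = ∅ :=
  stmt7_general lt cfl hSymm hInh hloc U C D hC k e e' hinj heD hcfl hlocU hlocC hlocD hnc
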